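/- arXiv:1904.03573 — 8 statements merged into one kernel-verified Lean document; each statement's English description precedes it below -/
import Mathlib

section
/- If (n, n+Δ) is a pair of natural numbers with n ≥ 1, Δ ≥ 1, and s₁₀(n·(n+Δ)) = Δ, then Δ ≡ 0 (mod 9) or Δ ≡ 5 (mod 9). -/
theorem sand_number_delta (n Δ : ℕ) (hn : 1 ≤ n) (hΔ : 1 ≤ Δ)
    (h : (Nat.digits 10 (n * (n + Δ))).sum = Δ) :
    Δ % 9 = 0 ∨ Δ % 9 = 5 := by
  have hm := Nat.modEq_digits_sum 9 10 (by norm_num) (n * (n + Δ))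
  rw [h] at hm
  have key : (n % 9 * ((n % 9 + Δ % 9) % 9)) % 9 = Δ % 9 := by
    have : n * (n + Δ) % 9 = Δ % 9 := hm
    rwa [Nat.mul_mod, Nat.add_mod] at this
  have h1 : n % 9 < 9 := Nat.mod_lt _ (by norm_num)
  have h2 : Δ % 9 < 9 := Nat.mod_lt _ (by norm_num)
  interval_cases hn9 : n % 9 <;> interval_cases hd9 : Δ % 9 <;> omega
end

section
/- If (n, n+Δ) is a SanD number pair (i.e., s₁₀(n·(n+Δ)) = Δ > 0) and Δ ≡ 5 (mod 9), then n ≡ 2 (mod 3) and n+Δ ≡ 1 (mod 3). -/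
theorem sand_number_delta_five (n Δ : ℕ) (hn : 1 ≤ n) (hΔ : 1 ≤ Δ)
    (h : (Nat.digits 10 (n * (n + Δ))).sum = Δ) (h9 : Δ % 9 = 5) :
    n % 3 = 2 ∧ (n + Δ) % 3 = 1 := by
  have h3 := Nat.modEq_three_digits_sum (n * (n + Δ))
  rw [h] at h3
  have hmod : (n * (n + Δ)) % 3 = Δ % 3 := h3
  have e := Nat.mul_mod n (n + Δ) 3
  have e2 := Nat.add_mod n Δ 3
  have hlt : n % 3 < 3 := Nat.mod_lt _ (by norm_num)
  interval_cases hh : (n % 3) <;> simp [hh] at e e2 ⊢ <;> omega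
end

section
/- If p and q = p + Δ are both prime with Δ > 0 and s₁₀(p·q) = Δ, then Δ ≡ 5 (mod 9). -/
theorem sand_prime_delta (p Δ : ℕ) (hp : Nat.Prime p) (hq : Nat.Prime (p + Δ))
    (hΔ : 0 < Δ) (h : (Nat.digits 10 (p * (p + Δ))).sum = Δ) :
    Δ % 9 = 5 := by
  have hmod : p * (p + Δ) ≡ (Nat.digits 10 (p * (p + Δ))).sum [MOD 9] :=
    Nat.modEq_digits_sum 9 10 (by norm_num) _
  rw [h] at hmod
  -- p is not divisible by 3 (else p = 3, contradiction)
  by_cases h3p : 3 ∣ p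
  · have hp3 : p = 3 := ((Nat.prime_dvd_prime_iff_eq (by norm_num) hp).mp h3p).symm
    subst hp3
    have key : (3 * (3 + Δ)) % 9 = Δ % 9 := hmod
    have hΔ3 : Δ % 3 = 0 := by omega
    have hdvd : 3 ∣ (3 + Δ) := by omega
    have := ((Nat.prime_dvd_prime_iff_eq (by norm_num) hq).mp hdvd).symm
    omega
  by_cases h3q : 3 ∣ (p + Δ)
  · have hq3 : p + Δ = 3 := ((Nat.prime_dvd_prime_iff_eq (by norm_num) hq).mp h3q).symm
    have hp2 : 2 ≤ p := hp.two_le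
    have : p = 2 ∧ Δ = 1 := by omega
    obtain ⟨hp2, hΔ1⟩ := this
    subst hp2; subst hΔ1
    rw [show 2 * (2 + 1) = 6 from rfl, show Nat.digits 10 6 = [6] by simp] at h
    simp at h
  -- general case
  have hp3 : p % 3 ≠ 0 := fun hc => h3p (Nat.dvd_of_mod_eq_zero hc)
  have hq3 : (p + Δ) % 3 ≠ 0 := fun hc => h3q (Nat.dvd_of_mod_eq_zero hc)
  set a := p % 9 with ha
  set d := Δ % 9 with hd
  have ha9 : a < 9 := Nat.mod_lt _ (by norm_num)
  have hd9 : d < 9 := Nat.mod_lt _ (by norm_num)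
  have h1 : p % 3 = a % 3 := (Nat.mod_mod_of_dvd p (by norm_num)).symm
  have h2 : Δ % 3 = d % 3 := (Nat.mod_mod_of_dvd Δ (by norm_num)).symm
  have key2 : a * (a + d) ≡ Δ [MOD 9] :=
    (Nat.ModEq.mul (Nat.mod_modEq p 9) ((Nat.mod_modEq p 9).add (Nat.mod_modEq Δ 9))).trans hmod
  have key3 : (a * (a + d)) % 9 = Δ % 9 := key2
  clear key2 hmod h
  interval_cases a <;> interval_cases d <;> omega
end

section
/- If p and q = p + Δ are both prime with Δ > 0 odd and s₁₀(p·q) = Δ, then p = 2 and q = 7. -/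
/-!
If `p` and `p + Δ` are primes with `Δ` odd, one of them is even, so `p = 2`. Peeling off the
last digit gives `s₁₀(n) ≤ n / 10 + 9`, so `Δ = s₁₀(2 (Δ + 2))` forces `Δ ≤ 11`, and among the
odd `Δ ≤ 11` only `Δ = 5` works.
-/

theorem Nat.digits_sum_le_div_add_mod (b n : ℕ) : (Nat.digits b n).sum ≤ n / b + n % b := by
  rcases Nat.lt_or_ge b 2 with hb | hb
  · interval_cases b <;> simp [Nat.digit_sum_le]
  · rcases Nat.eq_zero_or_pos n with rfl | hn
    · simp
    rw [Nat.digits_def' hb hn, List.sum_cons]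
    have := Nat.digit_sum_le b (n / b)
    omega

theorem Nat.Prime.eq_two_of_prime_add_odd {p d : ℕ} (hp : p.Prime) (hq : (p + d).Prime)
    (hd : Odd d) : p = 2 := by
  by_contra hne
  have hq2 : p + d = 2 := hq.even_iff.mp ((hp.odd_of_ne_two hne).add_odd hd)
  have := hp.two_le
  have := hd.pos
  omega

theorem sand_prime_odd_delta_general (p Δ : ℕ) (hp : Nat.Prime p) (hq : Nat.Prime (p + Δ))
    (hodd : Odd Δ) (h : (Nat.digits 10 (p * (p + Δ))).sum = Δ) :
    p = 2 ∧ p + Δ = 7 := by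
  obtain rfl := hp.eq_two_of_prime_add_odd hq hodd
  have hΔ : Δ ≤ 11 := by
    have := Nat.digits_sum_le_div_add_mod 10 (2 * (2 + Δ))
    have := Nat.mod_lt (2 * (2 + Δ)) (show 10 > 0 by norm_num)
    omega
  refine ⟨rfl, ?_⟩
  interval_cases Δ <;> simp_all

theorem sand_prime_odd_delta (p Δ : ℕ) (hp : Nat.Prime p) (hq : Nat.Prime (p + Δ))
    (hΔ : 0 < Δ) (hodd : Odd Δ) (h : (Nat.digits 10 (p * (p + Δ))).sum = Δ) :
    p = 2 ∧ p + Δ = 7 :=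
  sand_prime_odd_delta_general p Δ hp hq hodd h
end

section
/- If p and q = p + Δ are both prime with Δ > 0 even and s₁₀(p·q) = Δ, then Δ = 14 + 18k for some natural number k. -/
theorem sand_prime_even_delta (p Δ : ℕ) (hp : Nat.Prime p) (hq : Nat.Prime (p + Δ))
    (hΔ : 0 < Δ) (heven : Even Δ) (h : (Nat.digits 10 (p * (p + Δ))).sum = Δ) :
    ∃ k : ℕ, Δ = 14 + 18 * k := by
  have h2 : Δ % 2 = 0 := Nat.even_iff.mp heven
  have hp2 : 2 ≤ p := hp.two_le
  -- 3 does not divide p + Δ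
  have h3 : ¬ (3 ∣ (p + Δ)) := by
    intro hdvd
    have := (Nat.prime_dvd_prime_iff_eq Nat.prime_three hq).mp hdvd
    omega
  have h3' : (p + Δ) % 3 ≠ 0 := fun hc => h3 (Nat.dvd_of_mod_eq_zero hc)
  -- digit sum congruence mod 9
  have hmod := Nat.modEq_digits_sum 9 10 (by norm_num) (p * (p + Δ))
  rw [h] at hmod
  have hm : Δ % 9 = (p * (p + Δ)) % 9 := hmod.symm
  rw [Nat.mul_mod, Nat.add_mod] at hm
  have hq3 : ((p % 9 + Δ % 9) % 9) % 3 ≠ 0 := by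
    have e1 : (p + Δ) % 3 = ((p + Δ) % 9) % 3 :=
      (Nat.mod_mod_of_dvd _ (by norm_num)).symm
    have e2 : (p + Δ) % 9 = (p % 9 + Δ % 9) % 9 := Nat.add_mod _ _ _
    rw [e1, e2] at h3'
    exact h3'
  have key : ∀ x < 9, ∀ d < 9,
      d = (x * ((x + d) % 9)) % 9 → ((x + d) % 9) % 3 ≠ 0 → d = 5 := by decide
  have h5 : Δ % 9 = 5 :=
    key (p % 9) (Nat.mod_lt _ (by norm_num)) (Δ % 9) (Nat.mod_lt _ (by norm_num)) hm hq3
  exact ⟨Δ / 18, by omega⟩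
end

section
/- If p and q = p + Δ are both prime with Δ > 0 and s₁₀(p·q) = Δ, then p ≡ 2 (mod 3) and q ≡ 1 (mod 3). -/
theorem sand_prime_mod_three (p Δ : ℕ) (hp : Nat.Prime p) (hq : Nat.Prime (p + Δ))
    (hΔ : 0 < Δ) (h : (Nat.digits 10 (p * (p + Δ))).sum = Δ) :
    p % 3 = 2 ∧ (p + Δ) % 3 = 1 := by
  have hm : p * (p + Δ) % 3 = Δ % 3 := by
    have := Nat.modEq_digits_sum 3 10 (by norm_num) (p * (p + Δ))
    rw [h] at this
    exact this
  rw [Nat.mul_mod, Nat.add_mod] at hm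
  have hplt : p % 3 < 3 := Nat.mod_lt _ (by norm_num)
  have hdlt : Δ % 3 < 3 := Nat.mod_lt _ (by norm_num)
  have hp0 : p % 3 ≠ 0 := by
    intro h0
    have h3 : (3 : ℕ) ∣ p := Nat.dvd_of_mod_eq_zero h0
    have hp3 : p = 3 := ((Nat.prime_dvd_prime_iff_eq (by norm_num) hp).mp h3).symm
    rw [h0] at hm
    simp at hm
    have : (3 : ℕ) ∣ p + Δ := by
      apply Nat.dvd_of_mod_eq_zero
      omega
    have := (Nat.prime_dvd_prime_iff_eq (by norm_num) hq).mp this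
    omega
  interval_cases hpv : p % 3 <;> interval_cases hdv : Δ % 3 <;> simp_all <;> omega
end

section
/- For all natural numbers r, s with 0 < r < s, the number S = 3 + 10^r + 10^s satisfies s₁₀(S·(S+14)) = 14. -/
namespace Sand

def ds (n : ℕ) : ℕ := (Nat.digits 10 n).sum

lemma ds_rec (n : ℕ) : ds n = n % 10 + ds (n / 10) := by
  rcases Nat.eq_zero_or_pos n with h | h
  · simp [h, ds]
  · rw [ds, Nat.digits_def' (by norm_num : 1 < 10) h]
    simp [ds]

lemma ds_one : ds 1 = 1 := by simp [ds]

lemma ds_subadd' : ∀ n a b : ℕ, a + b = n → ds (a + b) ≤ ds a + ds b := by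
  intro n
  induction n using Nat.strong_induction_on with
  | _ n ih =>
    intro a b hab
    rcases Nat.eq_zero_or_pos n with h0 | h0
    · obtain ⟨rfl, rfl⟩ : a = 0 ∧ b = 0 := by omega
      simp [ds]
    · have hd : (a + b) / 10 < n := hab ▸ Nat.div_lt_self (hab ▸ h0) (by norm_num)
      have hc : (a % 10 + b % 10) / 10 = 0 ∨ (a % 10 + b % 10) / 10 = 1 := by omega
      rcases hc with hc | hc
      · have hq : (a + b) / 10 = a / 10 + b / 10 := by omega
        have h1 := ih ((a + b) / 10) hd (a / 10) (b / 10) hq.symm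
        rw [ds_rec (a + b), ds_rec a, ds_rec b, hq]
        omega
      · have hq : (a + b) / 10 = (a / 10 + b / 10) + 1 := by omega
        have hlt1 : (a / 10 + b / 10) + 1 < n := by omega
        have hlt2 : a / 10 + b / 10 < n := by omega
        have h1 := ih _ hlt1 (a / 10 + b / 10) 1 rfl
        have h2 := ih _ hlt2 (a / 10) (b / 10) rfl
        rw [ds_rec (a + b), ds_rec a, ds_rec b, hq]
        rw [ds_one] at h1
        omega

lemma ds_subadd (a b : ℕ) : ds (a + b) ≤ ds a + ds b := ds_subadd' (a + b) a b rfl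

lemma ds_pow_mul (k c : ℕ) : ds (10 ^ k * c) = ds c := by
  induction k with
  | zero => simp
  | succ k ih =>
    have h : 10 ^ (k + 1) * c = 10 * (10 ^ k * c) := by ring
    rw [h, ds_rec]
    have h1 : 10 * (10 ^ k * c) % 10 = 0 := by omega
    have h2 : 10 * (10 ^ k * c) / 10 = 10 ^ k * c := by omega
    rw [h1, h2, ih]
    omega

end Sand

theorem sand_family_14 (r s : ℕ) (hr : 0 < r) (hrs : r < s) :
    (Nat.digits 10 ((3 + 10 ^ r + 10 ^ s) * (3 + 10 ^ r + 10 ^ s + 14))).sum = 14 := by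
  obtain ⟨a, rfl⟩ : ∃ a, r = a + 1 := ⟨r - 1, by omega⟩
  obtain ⟨b, rfl⟩ : ∃ b, s = (a + 1) + b + 1 := ⟨s - (a + 1) - 1, by omega⟩
  set M : ℕ := 10 ^ a * 2 + 10 ^ (a + b + 1) * 2 + 10 ^ (2 * a) * 1
      + 10 ^ (2 * (a + b + 1)) * 1 + 10 ^ (a + (a + b + 1)) * 2 with hM
  have hN : (3 + 10 ^ (a + 1) + 10 ^ ((a + 1) + b + 1)) *
      (3 + 10 ^ (a + 1) + 10 ^ ((a + 1) + b + 1) + 14) = 51 + 100 * M := by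
    rw [hM]; ring_nf
  rw [hN]
  -- digit sum of M is 8
  have hle : Sand.ds M ≤ 8 := by
    calc Sand.ds M ≤ Sand.ds (10 ^ a * 2 + 10 ^ (a + b + 1) * 2 + 10 ^ (2 * a) * 1
          + 10 ^ (2 * (a + b + 1)) * 1) + Sand.ds (10 ^ (a + (a + b + 1)) * 2) :=
            Sand.ds_subadd _ _
      _ ≤ _ := by
        have h1 := Sand.ds_subadd (10 ^ a * 2 + 10 ^ (a + b + 1) * 2 + 10 ^ (2 * a) * 1)
            (10 ^ (2 * (a + b + 1)) * 1)
        have h2 := Sand.ds_subadd (10 ^ a * 2 + 10 ^ (a + b + 1) * 2) (10 ^ (2 * a) * 1)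
        have h3 := Sand.ds_subadd (10 ^ a * 2) (10 ^ (a + b + 1) * 2)
        simp only [Sand.ds_pow_mul] at *
        have e2 : Sand.ds 2 = 2 := by simp [Sand.ds]
        have e1 : Sand.ds 1 = 1 := Sand.ds_one
        omega
  have hmod : Sand.ds M % 9 = 8 := by
    have h1 : M ≡ Sand.ds M [MOD 9] := Nat.modEq_nine_digits_sum M
    have h2 : M ≡ 8 [MOD 9] := by
      have h10 : ∀ k : ℕ, (10 : ℕ) ^ k ≡ 1 [MOD 9] := by
        intro k
        simpa using (Nat.ModEq.pow k (by decide : (10 : ℕ) ≡ 1 [MOD 9]))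
      have := ((((((h10 a).mul_right 2).add ((h10 (a+b+1)).mul_right 2)).add
          ((h10 (2*a)).mul_right 1)).add ((h10 (2*(a+b+1))).mul_right 1)).add
          ((h10 (a+(a+b+1))).mul_right 2))
      simpa [hM] using this
    have := (h1.symm.trans h2)
    simpa [Nat.ModEq] using this
  have hdsM : Sand.ds M = 8 := by omega
  have e1 : (51 + 100 * M) % 10 = 1 := by omega
  have e2 : (51 + 100 * M) / 10 = 5 + 10 * M := by omega
  have e3 : (5 + 10 * M) % 10 = 5 := by omega
  have e4 : (5 + 10 * M) / 10 = M := by omega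
  have : Sand.ds (51 + 100 * M) = 14 := by
    rw [Sand.ds_rec, e1, e2, Sand.ds_rec, e3, e4, hdsM]
  simpa [Sand.ds] using this
end

section
/- If p and q = p + Δ are both prime with Δ > 0 and s₂(p·q) = Δ (binary SanD primes), then Δ is even and Δ ≥ 4, i.e., Δ = 4 + 2k for some natural number k. -/
lemma sand_sum_pos : ∀ n : ℕ, 0 < n → 0 < (Nat.digits 2 n).sum := by
  intro n
  induction n using Nat.strong_induction_on with
  | _ n ih =>
    intro hn
    rw [Nat.digits_def' one_lt_two hn, List.sum_cons]
    rcases Nat.even_or_odd n with he | ho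
    · have h0 : n % 2 = 0 := Nat.even_iff.mp he
      have h2 : 0 < n / 2 := by omega
      have := ih (n / 2) (by omega) h2
      omega
    · have : n % 2 = 1 := Nat.odd_iff.mp ho
      omega

lemma sand_sum_one : ∀ n : ℕ, (Nat.digits 2 n).sum = 1 → ∃ a, n = 2 ^ a := by
  intro n
  induction n using Nat.strong_induction_on with
  | _ n ih =>
    intro hs
    have hn : 0 < n := by
      rcases Nat.eq_zero_or_pos n with rfl | h
      · simp at hs
      · exact h
    rw [Nat.digits_def' one_lt_two hn, List.sum_cons] at hs
    rcases Nat.even_or_odd n with he | ho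
    · have h0 : n % 2 = 0 := Nat.even_iff.mp he
      have h2 : (Nat.digits 2 (n / 2)).sum = 1 := by omega
      obtain ⟨a, ha⟩ := ih (n / 2) (by omega) h2
      exact ⟨a + 1, by rw [pow_succ]; omega⟩
    · have h1 : n % 2 = 1 := Nat.odd_iff.mp ho
      have h2 : (Nat.digits 2 (n / 2)).sum = 0 := by omega
      have : n / 2 = 0 := by
        by_contra hne
        have := sand_sum_pos (n / 2) (by omega)
        omega
      exact ⟨0, by omega⟩

lemma sand_sum_le (n : ℕ) (hn : 0 < n) : (Nat.digits 2 n).sum ≤ Nat.log 2 n + 1 := by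
  have hlen : (Nat.digits 2 n).length = Nat.log 2 n + 1 :=
    Nat.digits_len 2 n one_lt_two (by omega)
  calc (Nat.digits 2 n).sum ≤ (Nat.digits 2 n).length • 1 :=
        List.sum_le_card_nsmul _ 1 (fun x hx => by
          have := Nat.digits_lt_base one_lt_two hx; omega)
    _ = Nat.log 2 n + 1 := by simp [hlen]

lemma sand_pow_gt : ∀ m : ℕ, 4 ≤ m → m + 3 < 2 ^ m := by
  intro m hm
  induction m with
  | zero => omega
  | succ k ih =>
    rcases Nat.lt_or_ge k 4 with h | h
    · have : k = 3 := by omega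
      subst this; norm_num
    · have := ih (by omega)
      have : 2 ^ k ≥ 5 := by omega
      rw [pow_succ]
      omega

theorem binary_sand_prime_delta (p Δ : ℕ) (hp : Nat.Prime p) (hq : Nat.Prime (p + Δ))
    (hΔ : 0 < Δ) (h : (Nat.digits 2 (p * (p + Δ))).sum = Δ) :
    ∃ k : ℕ, Δ = 4 + 2 * k := by
  have hp2 := hp.two_le
  rcases Nat.even_or_odd Δ with heΔ | hoΔ
  · -- Δ even: rule out Δ = 2
    by_cases hΔ2 : Δ = 2
    · exfalso
      subst hΔ2
      -- p must be odd
      have hpodd : p % 2 = 1 := by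
        by_contra hpe
        have hpeven : p % 2 = 0 := by omega
        have : p = 2 := (Nat.Prime.even_iff hp).mp (Nat.even_iff.mpr hpeven)
        subst this
        norm_num at hq
      obtain ⟨t, rfl⟩ : ∃ t, p = 2 * t + 1 := ⟨p / 2, by omega⟩
      set n := (2 * t + 1) * (2 * t + 1 + 2) with hn
      have hnval : n = 4 * (t * t) + 8 * t + 3 := by rw [hn]; ring
      have hnpos : 0 < n := by omega
      have hnodd : n % 2 = 1 := by omega
      rw [Nat.digits_def' one_lt_two hnpos, List.sum_cons] at h
      have hhalf : (Nat.digits 2 (n / 2)).sum = 1 := by omega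
      obtain ⟨a, ha⟩ := sand_sum_one (n / 2) hhalf
      have hne : n = 2 * 2 ^ a + 1 := by omega
      cases a with
      | zero =>
        simp at hne
        have : t = 0 := by nlinarith
        omega
      | succ k =>
        have h4 : 2 * 2 ^ (k + 1) = 4 * 2 ^ k := by ring
        have : n = 4 * 2 ^ k + 1 := by omega
        omega
    · -- Δ even, Δ ≥ 4
      obtain ⟨m, hm⟩ := heΔ
      exact ⟨m - 2, by omega⟩
  · -- Δ odd: contradiction
    exfalso
    have hpeq : p = 2 := by
      by_contra hne
      have hpodd : p % 2 = 1 := by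
        rcases Nat.even_or_odd p with he | ho
        · exact absurd ((Nat.Prime.even_iff hp).mp he) hne
        · exact Nat.odd_iff.mp ho
      have hqeven : (p + Δ) % 2 = 0 := by
        have := Nat.odd_iff.mp hoΔ
        omega
      have : p + Δ = 2 := (Nat.Prime.even_iff hq).mp (Nat.even_iff.mpr hqeven)
      omega
    subst hpeq
    have hpos : 0 < 2 + Δ := by omega
    have hmul : 2 * (2 + Δ) % 2 = 0 := by omega
    have hdiv : 2 * (2 + Δ) / 2 = 2 + Δ := by omega
    rw [Nat.digits_def' one_lt_two (by omega : 0 < 2 * (2 + Δ)), hmul, hdiv,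
      List.sum_cons] at h
    have h' : (Nat.digits 2 (2 + Δ)).sum = Δ := by omega
    have hΔodd := Nat.odd_iff.mp hoΔ
    have hcases : Δ = 1 ∨ Δ = 3 ∨ 5 ≤ Δ := by omega
    rcases hcases with rfl | rfl | h5
    · norm_num [Nat.digits_def' one_lt_two] at h'
    · norm_num [Nat.digits_def' one_lt_two] at h'
    · have hlt : 2 + Δ < 2 ^ (Δ - 1) := by
        have := sand_pow_gt (Δ - 1) (by omega)
        omega
      have hlog : Nat.log 2 (2 + Δ) < Δ - 1 := Nat.log_lt_of_lt_pow (by omega) hlt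
      have := sand_sum_le (2 + Δ) hpos
      omega
end
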